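/- For every real number $c > 2$, one has $(1+c)\left( h\!\left(\frac{1}{1+c}\right) - \frac{2}{1+c} \right) > \frac{1}{2}$; equivalently, $(1+c)\, h\!\left(\frac{1}{1+c}\right) - 2 > \frac{1}{2}$. -/

import Mathlib

/-!
In nats, `(1 + c) h(1/(1+c)) = (1 + c) log (1 + c) - c log c`, whose derivative `log (1 + 1/c)` is
positive, so it increases in `c`. At `c = 2` it equals `3 log 3 - 2 log 2`, which exceeds
`(5/2) log 2` because `9 > 8`. Hence `(1 + c) h(1/(1+c)) > 5/2` bits for `c > 2`.
-/

/-- The binary entropy function in bits: `h x = -x log₂ x - (1-x) log₂ (1-x)`.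
Since `Real.logb 2 0 = 0` in Mathlib, this satisfies `h 0 = h 1 = 0`. -/
noncomputable def binEntropy2 (x : ℝ) : ℝ :=
  -x * Real.logb 2 x - (1 - x) * Real.logb 2 (1 - x)

open Real Set

lemma binEntropy2_eq_binEntropy_div_log_two (x : ℝ) : binEntropy2 x = binEntropy x / log 2 := by
  simp only [binEntropy2, binEntropy, logb, log_inv]
  ring

lemma one_add_mul_binEntropy_inv_one_add {c : ℝ} (hc : 0 < c) :
    (1 + c) * binEntropy (1 + c)⁻¹ = (1 + c) * log (1 + c) - c * log c := by
  have hc1 : (0 : ℝ) < 1 + c := by linarith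
  have hcompl : 1 - (1 + c)⁻¹ = c / (1 + c) := by field_simp; ring
  rw [binEntropy, hcompl, inv_inv, inv_div, log_div hc1.ne' hc.ne']
  field_simp
  ring

lemma hasDerivAt_one_add_mul_log_sub_mul_log {x : ℝ} (hx : 0 < x) :
    HasDerivAt (fun y : ℝ => (1 + y) * log (1 + y) - y * log y) (log (1 + x) - log x) x := by
  have hleft : HasDerivAt (fun y : ℝ => (1 + y) * log (1 + y)) (log (1 + x) + 1) x :=
    ((hasDerivAt_mul_log (by linarith : (1 : ℝ) + x ≠ 0)).comp x
      ((hasDerivAt_id x).const_add 1)).congr_deriv (mul_one _)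
  exact (hleft.sub (hasDerivAt_mul_log hx.ne')).congr_deriv (by ring)

lemma strictMonoOn_one_add_mul_log_sub_mul_log :
    StrictMonoOn (fun x : ℝ => (1 + x) * log (1 + x) - x * log x) (Ici 0) := by
  apply strictMonoOn_of_deriv_pos (convex_Ici 0)
  · exact ((continuous_mul_log.comp (continuous_const.add continuous_id)).sub
      continuous_mul_log).continuousOn
  · intro x hx
    rw [interior_Ici, mem_Ioi] at hx
    rw [(hasDerivAt_one_add_mul_log_sub_mul_log hx).deriv, sub_pos]
    exact log_lt_log hx (by linarith)

lemma five_div_two_mul_log_two_lt_one_add_mul_log_sub_mul_log {c : ℝ} (hc : 2 < c) :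
    5 / 2 * log 2 < (1 + c) * log (1 + c) - c * log c := by
  have hlog_eight_lt_log_nine : 3 * log 2 < 2 * log 3 := by
    rw [← log_rpow two_pos, ← log_rpow three_pos]
    exact log_lt_log (by positivity) (by norm_num)
  calc 5 / 2 * log 2 < (1 + 2) * log (1 + 2) - 2 * log 2 := by norm_num; linarith
    _ < (1 + c) * log (1 + c) - c * log c :=
      strictMonoOn_one_add_mul_log_sub_mul_log (by norm_num) (by simp; linarith) hc

lemma five_div_two_lt_one_add_mul_binEntropy2 {c : ℝ} (hc : 2 < c) :
    5 / 2 < (1 + c) * binEntropy2 (1 / (1 + c)) := by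
  rw [binEntropy2_eq_binEntropy_div_log_two, one_div, ← mul_div_assoc,
    one_add_mul_binEntropy_inv_one_add (by linarith), lt_div_iff₀ (log_pos one_lt_two)]
  exact five_div_two_mul_log_two_lt_one_add_mul_log_sub_mul_log hc

theorem stmt_1 (c : ℝ) (hc : 2 < c) :
    (1 + c) * (binEntropy2 (1 / (1 + c)) - 2 / (1 + c)) > 1 / 2 ∧
    (1 + c) * binEntropy2 (1 / (1 + c)) - 2 > 1 / 2 := by
  have hbound := five_div_two_lt_one_add_mul_binEntropy2 hc
  have hdistrib : (1 + c) * (binEntropy2 (1 / (1 + c)) - 2 / (1 + c)) =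
      (1 + c) * binEntropy2 (1 / (1 + c)) - 2 := by
    field_simp
  constructor
  · rw [hdistrib]; linarith
  · linarith
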